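/- arXiv:1509.08866 — 4 statements merged into one kernel-verified Lean document; each statement's English description precedes it below -/
import Mathlib

section
/- Let f : ℝ>0 → (0,∞) be a nowhere-zero multiplicatively convex function. Then f has bounded exponent (i.e. there is R > 0 with |log f(t₁) − log f(t₀)| ≤ R·|log t₁ − log t₀| for all distinct t₀,t₁ > 0) if and only if both limits deg⁺(f) = lim_{t₀,t₁→+∞} (log f(t₀) − log f(t₁))/(log t₀ − log t₁) and deg⁻(f) = lim_{t₀,t₁→0⁺} (log f(t₀) − log f(t₁))/(log t₀ − log t₁) exist in ℝ; in that case deg⁺(f) = inf{D ∈ ℝ : f(t)·t^{−D} → 0 as t→+∞} and deg⁻(f) = sup{D ∈ ℝ : f(t)·t^{−D} → 0 as t→0⁺}. -/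
open Real Set Filter

def MulConvex (f : ℝ → ℝ) : Prop :=
  ∀ t₀ t₁ l : ℝ, 0 < t₀ → 0 < t₁ → 0 < l → l < 1 →
    f (t₀ ^ l * t₁ ^ (1 - l)) ≤ f t₀ ^ l * f t₁ ^ (1 - l)

/-- Slope of the chord of the log-log plot of `f` through parameters `a` and `b`. -/
noncomputable def logSlope (f : ℝ → ℝ) (a b : ℝ) : ℝ :=
  (Real.log (f a) - Real.log (f b)) / (Real.log a - Real.log b)

/-- Pairs of distinct parameters both tending to `+∞`. -/
def pairTop : Filter (ℝ × ℝ) := (atTop ×ˢ atTop) ⊓ 𝓟 {p : ℝ × ℝ | p.1 ≠ p.2}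

/-- Pairs of distinct positive parameters both tending to `0⁺`. -/
def pairBot : Filter (ℝ × ℝ) :=
  ((nhdsWithin 0 (Ioi 0)) ×ˢ (nhdsWithin 0 (Ioi 0))) ⊓ 𝓟 {p : ℝ × ℝ | p.1 ≠ p.2}

open Topology

/-!
Substituting `t = exp x` turns `f` into `g x = log (f (exp x))`: multiplicative convexity of `f` is
convexity of `g`, the difference quotients `logSlope f` are the chord slopes of `g`, and
`f t * t ^ (-D) = exp (g x - D * x)`. Chord slopes of a convex function grow as the chord moves to
the right, so along pairs of distinct points tending to `+∞` (resp. `-∞`) they converge iff they are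
bounded above (resp. below), the limit being their supremum (resp. infimum) `d`; bounded exponent
says that all chord slopes are bounded. Finally, for `D > d` the graph of `g` lies below a line of
slope `d < D`, so `g x - D * x → -∞` as `x → +∞`, while for `D < d` it eventually lies above a line
of slope `> D`, so `g x - D * x → +∞`; this identifies `d` with the infimum of the growth exponents
at `+∞`, and symmetrically at `-∞`.
-/

noncomputable def logLog (f : ℝ → ℝ) (x : ℝ) : ℝ := Real.log (f (Real.exp x))

def chordSlopes (g : ℝ → ℝ) : Set ℝ := {s | ∃ x y, x < y ∧ slope g x y = s}

/-- `pairTop` and `pairBot` are `distinctPairs atTop` and `distinctPairs (𝓝[>] 0)` by definition. -/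
def distinctPairs {α : Type*} (l : Filter α) : Filter (α × α) := l ×ˢ l ⊓ 𝓟 {p | p.1 ≠ p.2}

lemma csInf_eq_of_forall_lt_mem_of_forall_lt_notMem {α : Type*}
    [ConditionallyCompleteLinearOrder α] [DenselyOrdered α] [NoMaxOrder α] {A : Set α} {d : α}
    (hmem : ∀ D, d < D → D ∈ A) (hnotMem : ∀ D < d, D ∉ A) : sInf A = d := by
  refine csInf_eq_of_forall_ge_of_forall_gt_exists_lt ?_ (fun D hD => ?_) fun w hw => ?_
  · obtain ⟨D, hD⟩ := exists_gt d
    exact ⟨D, hmem D hD⟩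
  · exact not_lt.1 fun h => hnotMem D h hD
  · obtain ⟨D, hdD, hDw⟩ := exists_between hw
    exact ⟨D, hmem D hdD, hDw⟩

lemma csSup_eq_of_forall_lt_mem_of_forall_lt_notMem {α : Type*}
    [ConditionallyCompleteLinearOrder α] [DenselyOrdered α] [NoMinOrder α] {A : Set α} {d : α}
    (hmem : ∀ D < d, D ∈ A) (hnotMem : ∀ D, d < D → D ∉ A) : sSup A = d := by
  refine csSup_eq_of_forall_le_of_forall_lt_exists_gt ?_ (fun D hD => ?_) fun w hw => ?_
  · obtain ⟨D, hD⟩ := exists_lt d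
    exact ⟨D, hmem D hD⟩
  · exact not_lt.1 fun h => hnotMem D h hD
  · obtain ⟨D, hwD, hDd⟩ := exists_between hw
    exact ⟨D, hmem D hDd, hwD⟩

lemma exists_pos_abs_le_iff_exists_isLUB_and_exists_isGLB {S : Set ℝ} (hS : S.Nonempty) :
    (∃ R > 0, ∀ s ∈ S, |s| ≤ R) ↔ (∃ d, IsLUB S d) ∧ (∃ d, IsGLB S d) := by
  constructor
  · rintro ⟨R, -, hR⟩
    exact ⟨Real.exists_isLUB hS ⟨R, fun s hs => (abs_le.1 (hR s hs)).2⟩,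
      Real.exists_isGLB hS ⟨-R, fun s hs => (abs_le.1 (hR s hs)).1⟩⟩
  · rintro ⟨⟨dp, hp⟩, ⟨dm, hm⟩⟩
    refine ⟨|dp| + |dm| + 1, by positivity, fun s hs => abs_le.2 ⟨?_, ?_⟩⟩
    · linarith [hm.1 hs, neg_abs_le dm, abs_nonneg dp]
    · linarith [hp.1 hs, le_abs_self dp, abs_nonneg dm]

section distinctPairs

variable {α β : Type*}

lemma eventually_ne_distinctPairs (l : Filter α) : ∀ᶠ p in distinctPairs l, p.1 ≠ p.2 :=
  mem_inf_of_right (mem_principal_self _)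

lemma eventually_distinctPairs {l : Filter α} {P : α → Prop} (hP : ∀ᶠ x in l, P x) :
    ∀ᶠ p in distinctPairs l, P p.1 ∧ P p.2 ∧ p.1 ≠ p.2 :=
  (((hP.prod_mk hP).filter_mono inf_le_left).and (eventually_ne_distinctPairs l)).mono
    fun _ ⟨hP, hne⟩ => ⟨hP.1, hP.2, hne⟩

lemma tendsto_prodMap_distinctPairs {h : α → β} {s : Set α} {l₁ : Filter α} {l₂ : Filter β}
    (hs : s ∈ l₁) (hinj : InjOn h s) (hl : Tendsto h l₁ l₂) :
    Tendsto (Prod.map h h) (distinctPairs l₁) (distinctPairs l₂) :=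
  tendsto_inf.2 ⟨(hl.prodMap hl).mono_left inf_le_left, tendsto_principal.2 <|
    (eventually_distinctPairs hs).mono fun _ ⟨h₁, h₂, hne⟩ => hinj.ne h₁ h₂ hne⟩

lemma distinctPairs_neBot {l : Filter ℝ} [l.NeBot] (h : Tendsto (· + 1) l l) :
    (distinctPairs l).NeBot :=
  (tendsto_inf.2 ⟨tendsto_id.prodMk h, tendsto_principal.2 <|
    Eventually.of_forall fun x => (lt_add_one x).ne⟩).neBot

instance : (distinctPairs (atTop : Filter ℝ)).NeBot :=
  distinctPairs_neBot (tendsto_atTop_add_const_right _ 1 tendsto_id)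

instance : (distinctPairs (atBot : Filter ℝ)).NeBot :=
  distinctPairs_neBot (tendsto_atBot_add_const_right _ 1 tendsto_id)

end distinctPairs

section ConvexOn

variable {g : ℝ → ℝ} {d D : ℝ}

lemma slope_mem_chordSlopes {x y : ℝ} (h : x ≠ y) : slope g x y ∈ chordSlopes g := by
  rcases h.lt_or_gt with h | h
  · exact ⟨x, y, h, rfl⟩
  · exact ⟨y, x, h, slope_comm g y x⟩

lemma chordSlopes_nonempty (g : ℝ → ℝ) : (chordSlopes g).Nonempty :=
  ⟨_, slope_mem_chordSlopes zero_ne_one⟩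

lemma ConvexOn.slope_le_slope_of_lt_of_le_of_le (hg : ConvexOn ℝ univ g) {a b u v : ℝ} (hab : a < b)
    (hu : b ≤ u) (hv : b ≤ v) (huv : u ≠ v) : slope g a b ≤ slope g u v :=
  calc slope g a b ≤ slope g a u :=
        hg.slope_mono (mem_univ a) ⟨mem_univ b, hab.ne'⟩ ⟨mem_univ u, (hab.trans_le hu).ne'⟩ hu
    _ = slope g u a := slope_comm g a u
    _ ≤ slope g u v :=
        hg.slope_mono (mem_univ u) ⟨mem_univ a, (hab.trans_le hu).ne⟩ ⟨mem_univ v, huv.symm⟩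
          (hab.le.trans hv)

lemma ConvexOn.slope_le_slope_of_le_of_le_of_lt (hg : ConvexOn ℝ univ g) {a b u v : ℝ}
    (hu : u ≤ a) (hv : v ≤ a) (huv : u ≠ v) (hab : a < b) : slope g u v ≤ slope g a b :=
  calc slope g u v = slope g v u := slope_comm g u v
    _ ≤ slope g v b :=
        hg.slope_mono (mem_univ v) ⟨mem_univ u, huv⟩ ⟨mem_univ b, (hv.trans_lt hab).ne'⟩
          (hu.trans hab.le)
    _ = slope g b v := slope_comm g v b
    _ ≤ slope g b a :=
        hg.slope_mono (mem_univ b) ⟨mem_univ v, (hv.trans_lt hab).ne⟩ ⟨mem_univ a, hab.ne⟩ hv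
    _ = slope g a b := slope_comm g b a

lemma ConvexOn.tendsto_slope_distinctPairs_atTop_iff (hg : ConvexOn ℝ univ g) :
    Tendsto (fun p : ℝ × ℝ => slope g p.1 p.2) (distinctPairs atTop) (𝓝 d) ↔
      IsLUB (chordSlopes g) d := by
  refine ⟨fun h => ⟨?_, fun M hM => ?_⟩,
    fun h => tendsto_order.2 ⟨fun d' hd' => ?_, fun d' hd' => ?_⟩⟩
  · rintro _ ⟨a, b, hab, rfl⟩
    exact ge_of_tendsto h <| (eventually_distinctPairs (eventually_ge_atTop b)).mono
      fun p ⟨hu, hv, huv⟩ => hg.slope_le_slope_of_lt_of_le_of_le hab hu hv huv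
  · exact le_of_tendsto h <| (eventually_ne_distinctPairs _).mono
      fun p huv => hM (slope_mem_chordSlopes huv)
  · obtain ⟨_, ⟨a, b, hab, rfl⟩, hs⟩ := (lt_isLUB_iff h).1 hd'
    exact (eventually_distinctPairs (eventually_ge_atTop b)).mono
      fun p ⟨hu, hv, huv⟩ => hs.trans_le (hg.slope_le_slope_of_lt_of_le_of_le hab hu hv huv)
  · exact (eventually_ne_distinctPairs _).mono
      fun p huv => (h.1 (slope_mem_chordSlopes huv)).trans_lt hd'

lemma ConvexOn.tendsto_slope_distinctPairs_atBot_iff (hg : ConvexOn ℝ univ g) :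
    Tendsto (fun p : ℝ × ℝ => slope g p.1 p.2) (distinctPairs atBot) (𝓝 d) ↔
      IsGLB (chordSlopes g) d := by
  refine ⟨fun h => ⟨?_, fun M hM => ?_⟩,
    fun h => tendsto_order.2 ⟨fun d' hd' => ?_, fun d' hd' => ?_⟩⟩
  · rintro _ ⟨a, b, hab, rfl⟩
    exact le_of_tendsto h <| (eventually_distinctPairs (eventually_le_atBot a)).mono
      fun p ⟨hu, hv, huv⟩ => hg.slope_le_slope_of_le_of_le_of_lt hu hv huv hab
  · exact ge_of_tendsto h <| (eventually_ne_distinctPairs _).mono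
      fun p huv => hM (slope_mem_chordSlopes huv)
  · exact (eventually_ne_distinctPairs _).mono
      fun p huv => hd'.trans_le (h.1 (slope_mem_chordSlopes huv))
  · obtain ⟨_, ⟨a, b, hab, rfl⟩, hs⟩ := (isGLB_lt_iff h).1 hd'
    exact (eventually_distinctPairs (eventually_le_atBot a)).mono
      fun p ⟨hu, hv, huv⟩ => (hg.slope_le_slope_of_le_of_le_of_lt hu hv huv hab).trans_lt hs

lemma tendsto_sub_mul_atTop_atBot (hd : d ∈ upperBounds (chordSlopes g)) (hD : d < D) :
    Tendsto (fun x => g x - D * x) atTop atBot := by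
  refine tendsto_atBot_mono' atTop ?_ <|
    tendsto_atBot_add_const_left _ (g 0) (tendsto_id.const_mul_atTop_of_neg (sub_neg.2 hD))
  filter_upwards [eventually_gt_atTop 0] with x hx
  have hslope : slope g 0 x ≤ d := hd ⟨0, x, hx, rfl⟩
  rw [slope_def_field, sub_zero, div_le_iff₀ hx] at hslope
  simp only [id]
  linarith

lemma ConvexOn.tendsto_sub_mul_atTop_atTop (hg : ConvexOn ℝ univ g) (h : IsLUB (chordSlopes g) d)
    (hD : D < d) : Tendsto (fun x => g x - D * x) atTop atTop := by
  obtain ⟨_, ⟨a, b, hab, rfl⟩, hs⟩ := (lt_isLUB_iff h).1 hD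
  refine tendsto_atTop_mono' atTop ?_ <| tendsto_atTop_add_const_left _
    (g b - slope g a b * b) (tendsto_id.const_mul_atTop (sub_pos.2 hs))
  filter_upwards [eventually_gt_atTop b] with x hx
  have hslope := hg.slope_le_slope_of_lt_of_le_of_le hab le_rfl hx.le hx.ne
  rw [slope_def_field g b, le_div_iff₀ (sub_pos.2 hx)] at hslope
  simp only [id]
  linarith

lemma tendsto_sub_mul_atBot_atBot (hd : d ∈ lowerBounds (chordSlopes g)) (hD : D < d) :
    Tendsto (fun x => g x - D * x) atBot atBot := by
  refine tendsto_atBot_mono' atBot ?_ <|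
    tendsto_atBot_add_const_left _ (g 0) (tendsto_id.const_mul_atBot (sub_pos.2 hD))
  filter_upwards [eventually_lt_atBot 0] with x hx
  have hslope : d ≤ slope g x 0 := hd ⟨x, 0, hx, rfl⟩
  rw [slope_def_field, zero_sub, le_div_iff₀ (neg_pos.2 hx)] at hslope
  simp only [id]
  linarith

lemma ConvexOn.tendsto_sub_mul_atBot_atTop (hg : ConvexOn ℝ univ g) (h : IsGLB (chordSlopes g) d)
    (hD : d < D) : Tendsto (fun x => g x - D * x) atBot atTop := by
  obtain ⟨_, ⟨a, b, hab, rfl⟩, hs⟩ := (isGLB_lt_iff h).1 hD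
  refine tendsto_atTop_mono' atBot ?_ <| tendsto_atTop_add_const_left _
    (g a - slope g a b * a) (tendsto_id.const_mul_atBot_of_neg (sub_neg.2 hs))
  filter_upwards [eventually_lt_atBot a] with x hx
  have hslope := hg.slope_le_slope_of_le_of_le_of_lt hx.le le_rfl hx.ne hab
  rw [slope_def_field g x, div_le_iff₀ (sub_pos.2 hx)] at hslope
  simp only [id]
  linarith

lemma ConvexOn.csInf_setOf_tendsto_sub_mul_atTop_atBot (hg : ConvexOn ℝ univ g)
    (h : IsLUB (chordSlopes g) d) :
    sInf {D | Tendsto (fun x => g x - D * x) atTop atBot} = d :=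
  csInf_eq_of_forall_lt_mem_of_forall_lt_notMem (fun _ hD => tendsto_sub_mul_atTop_atBot h.1 hD)
    fun _ hD => (hg.tendsto_sub_mul_atTop_atTop h hD).not_tendsto disjoint_atTop_atBot

lemma ConvexOn.csSup_setOf_tendsto_sub_mul_atBot_atBot (hg : ConvexOn ℝ univ g)
    (h : IsGLB (chordSlopes g) d) :
    sSup {D | Tendsto (fun x => g x - D * x) atBot atBot} = d :=
  csSup_eq_of_forall_lt_mem_of_forall_lt_notMem (fun _ hD => tendsto_sub_mul_atBot_atBot h.1 hD)
    fun _ hD => (hg.tendsto_sub_mul_atBot_atTop h hD).not_tendsto disjoint_atTop_atBot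

end ConvexOn

section logLog

variable {f : ℝ → ℝ}

lemma MulConvex.convexOn_logLog (hconv : MulConvex f) (hfpos : ∀ t, 0 < t → 0 < f t) :
    ConvexOn ℝ univ (logLog f) := by
  refine convexOn_iff_forall_pos.2 ⟨convex_univ, fun x _ y _ a b ha hb hab => ?_⟩
  obtain rfl : b = 1 - a := by linarith
  have hx := hfpos _ (exp_pos x)
  have hy := hfpos _ (exp_pos y)
  have hmul := hconv (exp x) (exp y) a (exp_pos x) (exp_pos y) ha (by linarith)
  rw [← exp_mul, ← exp_mul, ← exp_add] at hmul
  calc logLog f (a • x + (1 - a) • y) = log (f (exp (x * a + y * (1 - a)))) := by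
        rw [show a • x + (1 - a) • y = x * a + y * (1 - a) by simp only [smul_eq_mul]; ring]; rfl
    _ ≤ log (f (exp x) ^ a * f (exp y) ^ (1 - a)) := log_le_log (hfpos _ (exp_pos _)) hmul
    _ = a • logLog f x + (1 - a) • logLog f y := by
        rw [log_mul (rpow_pos_of_pos hx a).ne' (rpow_pos_of_pos hy _).ne', log_rpow hx,
          log_rpow hy]
        rfl

lemma logSlope_exp_exp (f : ℝ → ℝ) (x y : ℝ) :
    logSlope f (exp x) (exp y) = slope (logLog f) x y := by
  rw [logSlope, slope_def_field, log_exp, log_exp, ← neg_div_neg_eq, neg_sub, neg_sub]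
  rfl

lemma tendsto_logSlope_distinctPairs_iff {L L' l : Filter ℝ} (hL : ∀ᶠ t in L, 0 < t)
    (hexp : Tendsto exp L' L) (hlog : Tendsto log L L') :
    Tendsto (fun p : ℝ × ℝ => logSlope f p.1 p.2) (distinctPairs L) l ↔
      Tendsto (fun p : ℝ × ℝ => slope (logLog f) p.1 p.2) (distinctPairs L') l := by
  refine ⟨fun h => ?_, fun h => ?_⟩
  · exact (h.comp (tendsto_prodMap_distinctPairs univ_mem exp_injective.injOn hexp)).congr
      fun p => logSlope_exp_exp f p.1 p.2
  · refine (h.comp (tendsto_prodMap_distinctPairs hL log_injOn_pos hlog)).congr' ?_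
    filter_upwards [eventually_distinctPairs hL] with p hp
    rw [Function.comp_apply, Prod.map_fst, Prod.map_snd, ← logSlope_exp_exp, exp_log hp.1,
      exp_log hp.2.1]

lemma boundedExponent_iff_chordSlopes :
    (∃ R > (0:ℝ), ∀ t₀ t₁ : ℝ, 0 < t₀ → 0 < t₁ → t₀ ≠ t₁ →
        |Real.log (f t₁) - Real.log (f t₀)| ≤ R * |Real.log t₁ - Real.log t₀|) ↔
      ∃ R > 0, ∀ s ∈ chordSlopes (logLog f), |s| ≤ R := by
  refine exists_congr fun R => and_congr_right fun hR => ⟨fun h => ?_, fun h => ?_⟩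
  · rintro _ ⟨x, y, hxy, rfl⟩
    have hbound := h (exp x) (exp y) (exp_pos x) (exp_pos y) (exp_injective.ne hxy.ne)
    rw [log_exp, log_exp] at hbound
    rw [slope_def_field, abs_div]
    exact div_le_of_le_mul₀ (abs_nonneg _) hR.le hbound
  · intro t₀ t₁ h₀ h₁ hne
    have hslope := h _ (slope_mem_chordSlopes (log_injOn_pos.ne h₀ h₁ hne))
    calc |log (f t₁) - log (f t₀)|
        = |log t₁ - log t₀| * |slope (logLog f) (log t₀) (log t₁)| := by
          rw [← abs_mul, ← smul_eq_mul, sub_smul_slope, vsub_eq_sub, logLog, logLog,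
            exp_log h₀, exp_log h₁]
      _ ≤ R * |log t₁ - log t₀| := by rw [mul_comm]; gcongr

lemma tendsto_mul_rpow_neg_iff (hfpos : ∀ t, 0 < t → 0 < f t) {L L' : Filter ℝ}
    (hmap : map exp L' = L) (D : ℝ) :
    Tendsto (fun t => f t * t ^ (-D)) L (𝓝 0) ↔
      Tendsto (fun x => logLog f x - D * x) L' atBot := by
  rw [← hmap, tendsto_map'_iff, ← tendsto_exp_comp_nhds_zero]
  refine tendsto_congr fun x => ?_
  rw [Function.comp_apply, exp_sub, logLog, exp_log (hfpos _ (exp_pos x)), ← exp_mul, mul_neg,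
    exp_neg, div_eq_mul_inv, mul_comm x]

end logLog

theorem stmt5 (f : ℝ → ℝ) (hfpos : ∀ t, 0 < t → 0 < f t) (hconv : MulConvex f) :
    ((∃ R > (0:ℝ), ∀ t₀ t₁ : ℝ, 0 < t₀ → 0 < t₁ → t₀ ≠ t₁ →
        |Real.log (f t₁) - Real.log (f t₀)| ≤ R * |Real.log t₁ - Real.log t₀|) ↔
      ((∃ d : ℝ, Tendsto (fun p : ℝ × ℝ => logSlope f p.1 p.2) pairTop (nhds d)) ∧
       (∃ d : ℝ, Tendsto (fun p : ℝ × ℝ => logSlope f p.1 p.2) pairBot (nhds d)))) ∧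
    (∀ dp dm : ℝ,
      Tendsto (fun p : ℝ × ℝ => logSlope f p.1 p.2) pairTop (nhds dp) →
      Tendsto (fun p : ℝ × ℝ => logSlope f p.1 p.2) pairBot (nhds dm) →
      dp = sInf {D : ℝ | Tendsto (fun t => f t * t ^ (-D)) atTop (nhds 0)} ∧
      dm = sSup {D : ℝ | Tendsto (fun t => f t * t ^ (-D)) (nhdsWithin 0 (Ioi 0)) (nhds 0)}) := by
  have hg := hconv.convexOn_logLog hfpos
  have htop (d : ℝ) : Tendsto (fun p : ℝ × ℝ => logSlope f p.1 p.2) pairTop (𝓝 d) ↔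
      IsLUB (chordSlopes (logLog f)) d :=
    (tendsto_logSlope_distinctPairs_iff (eventually_gt_atTop 0) tendsto_exp_atTop
      tendsto_log_atTop).trans hg.tendsto_slope_distinctPairs_atTop_iff
  have hbot (d : ℝ) : Tendsto (fun p : ℝ × ℝ => logSlope f p.1 p.2) pairBot (𝓝 d) ↔
      IsGLB (chordSlopes (logLog f)) d :=
    (tendsto_logSlope_distinctPairs_iff self_mem_nhdsWithin tendsto_exp_atBot_nhdsGT
      tendsto_log_nhdsGT_zero).trans hg.tendsto_slope_distinctPairs_atBot_iff
  refine ⟨?_, fun dp dm hp hm => ?_⟩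
  · rw [boundedExponent_iff_chordSlopes]
    simp only [htop, hbot]
    exact exists_pos_abs_le_iff_exists_isLUB_and_exists_isGLB (chordSlopes_nonempty _)
  · simp only [tendsto_mul_rpow_neg_iff hfpos map_exp_atTop,
      tendsto_mul_rpow_neg_iff hfpos map_exp_atBot]
    exact ⟨(hg.csInf_setOf_tendsto_sub_mul_atTop_atBot ((htop dp).1 hp)).symm,
      (hg.csSup_setOf_tendsto_sub_mul_atBot_atBot ((hbot dm).1 hm)).symm⟩
end

section
/- A continuous piecewise monomial function f : (a,b) → (0,∞), equal to C_i · t^{r_i} on consecutive subintervals (c_{i-1}, c_i) for a = c₀ < c₁ < ⋯ < c_n = b, is multiplicatively convex if and only if r₁ ≤ r₂ ≤ ⋯ ≤ r_n. -/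
open Real Set

/-!
In the coordinate `x = log t`, multiplicative convexity of `f` is ordinary convexity of
`g = log ∘ f ∘ exp`, and `g` is continuous and affine with slope `rᵢ` on the `i`-th piece.
Secant slopes of a convex function increase, which forces `rᵢ ≤ rᵢ₊₁` across each breakpoint.
Conversely, if the slopes increase then, thanks to continuity at the breakpoints, the affine
piece through any point lies below `g` on the whole interval; a function with a supporting line
at every point is convex.
-/

def MulConvexOn (s : Set ℝ) (f : ℝ → ℝ) : Prop :=
  ∀ t₀ ∈ s, ∀ t₁ ∈ s, ∀ l : ℝ, 0 < l → l < 1 →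
    f (t₀ ^ l * t₁ ^ (1 - l)) ≤ f t₀ ^ l * f t₁ ^ (1 - l)

theorem Real.mem_Ioo_log_iff {u v x : ℝ} (hu : 0 < u) (hv : 0 < v) :
    x ∈ Ioo (log u) (log v) ↔ exp x ∈ Ioo u v := by
  rw [mem_Ioo, mem_Ioo, log_lt_iff_lt_exp hu, lt_log_iff_exp_lt hv]

theorem mulConvexOn_Ioo_iff_convexOn_log_comp_exp {a b : ℝ} (ha : 0 < a) (hb : 0 < b)
    {f : ℝ → ℝ} (hf : ∀ t ∈ Ioo a b, 0 < f t) :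
    MulConvexOn (Ioo a b) f ↔ ConvexOn ℝ (Ioo (log a) (log b)) (fun x ↦ log (f (exp x))) := by
  have hmem : ∀ x, x ∈ Ioo (log a) (log b) ↔ exp x ∈ Ioo a b := fun x ↦ mem_Ioo_log_iff ha hb
  have hlog : ∀ x ∈ Ioo (log a) (log b), ∀ y ∈ Ioo (log a) (log b), ∀ l : ℝ, 0 < l → l < 1 →
      (f (exp x ^ l * exp y ^ (1 - l)) ≤ f (exp x) ^ l * f (exp y) ^ (1 - l) ↔
        log (f (exp (l • x + (1 - l) • y))) ≤
          l • log (f (exp x)) + (1 - l) • log (f (exp y))) := by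
    intro x hx y hy l hl0 hl1
    have hxy :=
      (hmem _).1 (convex_Ioo _ _ hx hy hl0.le (sub_nonneg.2 hl1.le) (add_sub_cancel l 1))
    have hfx := hf _ ((hmem x).1 hx)
    have hfy := hf _ ((hmem y).1 hy)
    rw [← exp_mul, ← exp_mul, ← exp_add, ← log_le_log_iff (hf _ ?_) (by positivity),
      log_mul (by positivity) (by positivity), log_rpow hfx, log_rpow hfy]
    · simp only [smul_eq_mul, mul_comm]
    · simpa [smul_eq_mul, mul_comm] using hxy
  constructor
  · refine fun h ↦ convexOn_iff_forall_pos.2 ⟨convex_Ioo _ _, ?_⟩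
    intro x hx y hy μ ν hμ hν hμν
    obtain rfl : ν = 1 - μ := by linarith
    exact (hlog x hx y hy μ hμ (by linarith)).1
      (h _ ((hmem x).1 hx) _ ((hmem y).1 hy) μ hμ (by linarith))
  · intro h t₀ ht₀ t₁ ht₁ l hl0 hl1
    have hx : log t₀ ∈ Ioo (log a) (log b) := by rw [hmem, exp_log (ha.trans ht₀.1)]; exact ht₀
    have hy : log t₁ ∈ Ioo (log a) (log b) := by rw [hmem, exp_log (ha.trans ht₁.1)]; exact ht₁
    have := (hlog _ hx _ hy l hl0 hl1).2 (h.2 hx hy hl0.le (by linarith) (by ring))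
    rwa [exp_log (ha.trans ht₀.1), exp_log (ha.trans ht₁.1)] at this

theorem ConvexOn.slope_le_of_affine_on_adjacent_Ioo {s : Set ℝ} {g : ℝ → ℝ}
    (hg : ConvexOn ℝ s g) {u v w p q p' q' : ℝ} (huv : u < v) (hvw : v < w)
    (hs : Ioo u w ⊆ s) (hleft : ∀ x ∈ Ioo u v, g x = p + q * x)
    (hright : ∀ x ∈ Ioo v w, g x = p' + q' * x) : q ≤ q' := by
  obtain ⟨x₁, hux₁, hx₁v⟩ := exists_between huv
  obtain ⟨x₂, hx₁x₂, hx₂v⟩ := exists_between hx₁v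
  obtain ⟨z₁, hvz₁, hz₁w⟩ := exists_between hvw
  obtain ⟨z₂, hz₁z₂, hz₂w⟩ := exists_between hz₁w
  have hslope : ∀ {P Q x y : ℝ}, x < y → (P + Q * y - (P + Q * x)) / (y - x) = Q := by
    intro P Q x y hxy
    rw [show P + Q * y - (P + Q * x) = Q * (y - x) by ring,
      mul_div_cancel_right₀ _ (sub_pos.2 hxy).ne']
  calc q = (g x₂ - g x₁) / (x₂ - x₁) := by
        rw [hleft x₁ ⟨hux₁, hx₁v⟩, hleft x₂ ⟨hux₁.trans hx₁x₂, hx₂v⟩, hslope hx₁x₂]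
    _ ≤ (g z₁ - g x₂) / (z₁ - x₂) :=
        hg.slope_mono_adjacent (hs ⟨hux₁, hx₁v.trans hvw⟩) (hs ⟨huv.trans hvz₁, hz₁w⟩)
          hx₁x₂ (hx₂v.trans hvz₁)
    _ ≤ (g z₂ - g z₁) / (z₂ - z₁) :=
        hg.slope_mono_adjacent (hs ⟨hux₁.trans hx₁x₂, hx₂v.trans hvw⟩)
          (hs ⟨huv.trans (hvz₁.trans hz₁z₂), hz₂w⟩) (hx₂v.trans hvz₁) hz₁z₂
    _ = q' := by
        rw [hright z₁ ⟨hvz₁, hz₁w⟩, hright z₂ ⟨hvz₁.trans hz₁z₂, hz₂w⟩, hslope hz₁z₂]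

theorem convexOn_of_forall_exists_affine_support {s : Set ℝ} (hs : Convex ℝ s) {g : ℝ → ℝ}
    (h : ∀ z ∈ s, ∃ p q : ℝ, g z = p + q * z ∧ ∀ x ∈ s, p + q * x ≤ g x) :
    ConvexOn ℝ s g := by
  refine ⟨hs, fun x hx y hy μ ν hμ hν hμν ↦ ?_⟩
  obtain ⟨p, q, hz, hle⟩ := h _ (hs hx hy hμ hν hμν)
  have hx' := mul_le_mul_of_nonneg_left (hle x hx) hμ
  have hy' := mul_le_mul_of_nonneg_left (hle y hy) hν
  rw [hz, smul_eq_mul, smul_eq_mul, smul_eq_mul, smul_eq_mul]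
  linear_combination hx' + hy' - p * hμν

theorem exists_lt_and_mem_Ico_of_mem_Ioo {α : Type*} [LinearOrder α] {n : ℕ} {d : ℕ → α} {x : α}
    (hx : x ∈ Ioo (d 0) (d n)) : ∃ j < n, x ∈ Ico (d j) (d (j + 1)) := by
  have hn : n ≠ 0 := by
    rintro rfl
    exact lt_irrefl _ (hx.1.trans hx.2)
  have hlast : x < d (n - 1 + 1) := by
    rw [Nat.sub_add_cancel (Nat.one_le_iff_ne_zero.2 hn)]; exact hx.2
  have hex : ∃ j, x < d (j + 1) := ⟨n - 1, hlast⟩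
  refine ⟨Nat.find hex, ?_, ?_, Nat.find_spec hex⟩
  · have := Nat.find_min' hex hlast
    omega
  · rcases h : Nat.find hex with _ | k
    · exact hx.1.le
    · exact not_lt.1 (Nat.find_min hex (h ▸ Nat.lt_succ_self k))

theorem le_of_le_of_forall_lt_succ {α : Type*} [Preorder α] {n : ℕ} {d : ℕ → α}
    (hd : ∀ i < n, d i < d (i + 1)) {i j : ℕ} (hij : i ≤ j) (hjn : j ≤ n) : d i ≤ d j :=
  (strictMonoOn_Iic_of_lt_succ (fun m hm ↦ by simpa using hd m hm)).monotoneOn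
    (mem_Iic.2 (hij.trans hjn)) (mem_Iic.2 hjn) hij

section PiecewiseAffine

variable {n : ℕ} {d : ℕ → ℝ} (hd : ∀ i < n, d i < d (i + 1)) {g : ℝ → ℝ} {p q : ℕ → ℝ}
  (hpiece : ∀ i < n, ∀ x ∈ Ioo (d i) (d (i + 1)), g x = p i + q i * x)
include hd hpiece

theorem eq_affine_of_mem_Icc (hg : ContinuousOn g (Ioo (d 0) (d n))) {j : ℕ} (hj : j < n) {x : ℝ}
    (hx : x ∈ Icc (d j) (d (j + 1)) ∩ Ioo (d 0) (d n)) : g x = p j + q j * x := by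
  refine EqOn.of_subset_closure (hpiece j hj) (hg.mono inter_subset_right) (by fun_prop) ?_ ?_ hx
  · exact fun y hy ↦ ⟨Ioo_subset_Icc_self hy,
      (le_of_le_of_forall_lt_succ hd (Nat.zero_le j) hj.le).trans_lt hy.1,
      hy.2.trans_le (le_of_le_of_forall_lt_succ hd hj le_rfl)⟩
  · rw [closure_Ioo (hd j hj).ne]
    exact inter_subset_left

theorem affine_pieces_eq_at_breakpoint (hg : ContinuousOn g (Ioo (d 0) (d n))) {k : ℕ}
    (hk : k + 1 < n) : p k + q k * d (k + 1) = p (k + 1) + q (k + 1) * d (k + 1) := by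
  have hmem : d (k + 1) ∈ Ioo (d 0) (d n) :=
    ⟨(le_of_le_of_forall_lt_succ hd (Nat.zero_le k) (by omega)).trans_lt (hd k (by omega)),
      (hd (k + 1) hk).trans_le (le_of_le_of_forall_lt_succ hd hk le_rfl)⟩
  rw [← eq_affine_of_mem_Icc hd hpiece hg (by omega)
      ⟨right_mem_Icc.2 (hd k (by omega)).le, hmem⟩,
    ← eq_affine_of_mem_Icc hd hpiece hg hk ⟨left_mem_Icc.2 (hd (k + 1) hk).le, hmem⟩]

theorem affine_le_of_slope_mono (hg : ContinuousOn g (Ioo (d 0) (d n)))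
    (hq : ∀ i, i + 1 < n → q i ≤ q (i + 1)) {j : ℕ} (hj : j < n) {x : ℝ}
    (hx : x ∈ Icc (d j) (d (j + 1))) {i : ℕ} (hi : i < n) : p i + q i * x ≤ p j + q j * x := by
  have hstep : ∀ k, k + 1 < n →
      p (k + 1) + q (k + 1) * x - (p k + q k * x) = (q (k + 1) - q k) * (x - d (k + 1)) := by
    intro k hk
    linear_combination (affine_pieces_eq_at_breakpoint hd hpiece hg hk).symm
  rcases le_total i j with hij | hji
  · have hup : ∀ k, i ≤ k → k ≤ j → p i + q i * x ≤ p k + q k * x := by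
      intro k hik
      induction k, hik using Nat.le_induction with
      | base => exact fun _ ↦ le_rfl
      | succ k _ ih =>
        intro hkj
        have hxk : 0 ≤ x - d (k + 1) :=
          sub_nonneg.2 ((le_of_le_of_forall_lt_succ hd hkj hj.le).trans hx.1)
        have := mul_nonneg (sub_nonneg.2 (hq k (by omega))) hxk
        linarith [ih (by omega), hstep k (by omega)]
    exact hup j hij le_rfl
  · have hdown : ∀ k, j ≤ k → k < n → p k + q k * x ≤ p j + q j * x := by
      intro k hjk
      induction k, hjk using Nat.le_induction with
      | base => exact fun _ ↦ le_rfl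
      | succ k hjk ih =>
        intro hkn
        have hxk : x - d (k + 1) ≤ 0 :=
          sub_nonpos.2 (hx.2.trans (le_of_le_of_forall_lt_succ hd (by omega) (by omega)))
        have := mul_nonpos_of_nonneg_of_nonpos (sub_nonneg.2 (hq k hkn)) hxk
        linarith [ih (by omega), hstep k hkn]
    exact hdown i hji hi

theorem convexOn_iff_slope_mono_of_piecewise_affine (hg : ContinuousOn g (Ioo (d 0) (d n))) :
    ConvexOn ℝ (Ioo (d 0) (d n)) g ↔ ∀ i, i + 1 < n → q i ≤ q (i + 1) := by
  constructor
  · intro hconv i hi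
    refine hconv.slope_le_of_affine_on_adjacent_Ioo (hd i (by omega)) (hd (i + 1) hi) ?_
      (hpiece i (by omega)) (hpiece (i + 1) hi)
    exact Ioo_subset_Ioo (le_of_le_of_forall_lt_succ hd (Nat.zero_le i) (by omega))
      (le_of_le_of_forall_lt_succ hd hi le_rfl)
  · intro hq
    refine convexOn_of_forall_exists_affine_support (convex_Ioo _ _) fun z hz ↦ ?_
    obtain ⟨j, hj, hzj⟩ := exists_lt_and_mem_Ico_of_mem_Ioo hz
    refine ⟨p j, q j, eq_affine_of_mem_Icc hd hpiece hg hj ⟨Ico_subset_Icc_self hzj, hz⟩,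
      fun x hx ↦ ?_⟩
    obtain ⟨k, hk, hxk⟩ := exists_lt_and_mem_Ico_of_mem_Ioo hx
    rw [eq_affine_of_mem_Icc hd hpiece hg hk ⟨Ico_subset_Icc_self hxk, hx⟩]
    exact affine_le_of_slope_mono hd hpiece hg hq hk (Ico_subset_Icc_self hxk) hj

end PiecewiseAffine

theorem stmt7_general (a b : ℝ) (ha : 0 < a) (n : ℕ)
    (c : ℕ → ℝ) (hc0 : c 0 = a) (hcn : c n = b) (hcmono : ∀ i < n, c i < c (i + 1))
    (C r : ℕ → ℝ) (hC : ∀ i < n, 0 < C i)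
    (f : ℝ → ℝ) (hcont : ContinuousOn f (Ioo a b)) (hpos : ∀ t ∈ Ioo a b, 0 < f t)
    (hpiece : ∀ i < n, ∀ t ∈ Ioo (c i) (c (i + 1)), f t = C i * t ^ (r i)) :
    (∀ t₀ ∈ Ioo a b, ∀ t₁ ∈ Ioo a b, ∀ l : ℝ, 0 < l → l < 1 →
        f (t₀ ^ l * t₁ ^ (1 - l)) ≤ f t₀ ^ l * f t₁ ^ (1 - l)) ↔
      (∀ i : ℕ, i + 1 < n → r i ≤ r (i + 1)) := by
  have hcpos : ∀ i ≤ n, 0 < c i := fun i hi ↦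
    ha.trans_le (hc0 ▸ le_of_le_of_forall_lt_succ hcmono (Nat.zero_le i) hi)
  have hb : 0 < b := hcn ▸ hcpos n le_rfl
  have hlogc : ∀ i < n, log (c i) < log (c (i + 1)) := fun i hi ↦
    log_lt_log (hcpos i hi.le) (hcmono i hi)
  have hg : ContinuousOn (fun x ↦ log (f (exp x))) (Ioo (log (c 0)) (log (c n))) := by
    rw [hc0, hcn]
    exact (hcont.comp continuousOn_exp fun x hx ↦ (mem_Ioo_log_iff ha hb).1 hx).log
      fun x hx ↦ (hpos _ ((mem_Ioo_log_iff ha hb).1 hx)).ne'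
  have hlogpiece : ∀ i < n, ∀ x ∈ Ioo (log (c i)) (log (c (i + 1))),
      log (f (exp x)) = log (C i) + r i * x := by
    intro i hi x hx
    rw [hpiece i hi _ ((mem_Ioo_log_iff (hcpos i hi.le) (hcpos (i + 1) hi)).1 hx),
      log_mul (hC i hi).ne' (by positivity), log_rpow (exp_pos x), log_exp]
  have hconvex := convexOn_iff_slope_mono_of_piecewise_affine hlogc hlogpiece hg
  rw [hc0, hcn] at hconvex
  exact (mulConvexOn_Ioo_iff_convexOn_log_comp_exp ha hb hpos).trans hconvex

theorem stmt7 (a b : ℝ) (ha : 0 < a) (hab : a < b) (n : ℕ) (hn : 0 < n)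
    (c : ℕ → ℝ) (hc0 : c 0 = a) (hcn : c n = b) (hcmono : ∀ i < n, c i < c (i + 1))
    (C r : ℕ → ℝ) (hC : ∀ i < n, 0 < C i)
    (f : ℝ → ℝ) (hcont : ContinuousOn f (Ioo a b)) (hpos : ∀ t ∈ Ioo a b, 0 < f t)
    (hpiece : ∀ i < n, ∀ t ∈ Ioo (c i) (c (i + 1)), f t = C i * t ^ (r i)) :
    (∀ t₀ ∈ Ioo a b, ∀ t₁ ∈ Ioo a b, ∀ l : ℝ, 0 < l → l < 1 →
        f (t₀ ^ l * t₁ ^ (1 - l)) ≤ f t₀ ^ l * f t₁ ^ (1 - l)) ↔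
      (∀ i : ℕ, i + 1 < n → r i ≤ r (i + 1)) :=
  stmt7_general a b ha n c hc0 hcn hcmono C r hC f hcont hpos hpiece
end

section
/- Let F : ℝ → ℝ be convex with all chord slopes bounded in absolute value by R, and suppose every chord of the graph of F has Y-intercept ≥ L, i.e. (F(x₀)x₁ − F(x₁)x₀)/(x₁ − x₀) ≥ L for all distinct x₀, x₁. Then as x → +∞, F(x) − d₊·x converges to a finite limit β₊ ∈ [L, F(0)], where d₊ = lim_{x→+∞} F(x)/x. -/
/-!
For convex `F`, the chord slope `slope F a x` is nondecreasing in `x`, and rewriting the chord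
intercept as `F a - a * slope F a x` shows (at `a = 1`) that it is bounded above, so it converges
to some `d`, independently of the base point `a`. Hence every chord slope is at most `d`, i.e.
`F x - d * x` is nonincreasing; letting `x → ∞` in the intercept bound gives `F a - d * a ≥ L`.
So `F x - d * x` decreases to its infimum, which lies between `L` and its value `F 0` at `0`.
-/

open Set Filter Topology

lemma chord_intercept_eq (f : ℝ → ℝ) {a b : ℝ} (hab : a ≠ b) :
    (f a * b - f b * a) / (b - a) = f a - a * slope f a b := by
  rw [slope_def_field]
  field_simp [sub_ne_zero.mpr hab.symm]
  ring

lemma tendsto_sub_const_atTop (b : ℝ) : Tendsto (fun x : ℝ => x - b) atTop atTop := by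
  simpa only [sub_eq_add_neg] using
    tendsto_atTop_add_const_right atTop (-b) (f := fun x => x) tendsto_id

lemma Filter.Tendsto.slope_atTop_of_slope_atTop {f : ℝ → ℝ} {a d : ℝ}
    (hd : Tendsto (slope f a) atTop (𝓝 d)) (b : ℝ) : Tendsto (slope f b) atTop (𝓝 d) := by
  have hcorr : Tendsto (fun x => ((b - a) * slope f a x + (f a - f b)) / (x - b)) atTop (𝓝 0) :=
    ((hd.const_mul (b - a)).add_const _).div_atTop (tendsto_sub_const_atTop b)
  refine (add_zero d ▸ hd.add hcorr).congr' ?_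
  filter_upwards [eventually_gt_atTop a, eventually_gt_atTop b] with x hxa hxb
  simp only [slope_def_field]
  field_simp [sub_ne_zero.mpr hxa.ne', sub_ne_zero.mpr hxb.ne']
  ring

lemma tendsto_div_self_atTop_of_slope {f : ℝ → ℝ} {d : ℝ}
    (hd : Tendsto (slope f 0) atTop (𝓝 d)) : Tendsto (fun x => f x / x) atTop (𝓝 d) := by
  have hsplit : (fun x => f x / x) = fun x => slope f 0 x + f 0 / x := by
    funext x
    rw [slope_def_field, sub_zero, ← add_div, sub_add_cancel]
  rw [hsplit, ← add_zero d]
  exact hd.add (tendsto_const_nhds.div_atTop tendsto_id)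

lemma antitone_sub_mul_of_slope_le {f : ℝ → ℝ} {d : ℝ} (h : ∀ x y, x < y → slope f x y ≤ d) :
    Antitone fun x => f x - d * x := by
  intro x y hxy
  rcases hxy.eq_or_lt with rfl | hlt
  · exact le_rfl
  have := h x y hlt
  rw [slope_def_field, div_le_iff₀ (sub_pos.mpr hlt)] at this
  linarith

namespace ConvexOn

variable {F : ℝ → ℝ}

lemma exists_tendsto_slope_atTop {a M : ℝ} (hF : ConvexOn ℝ (Ici a) F)
    (hM : ∀ x, a < x → slope F a x ≤ M) : ∃ d, Tendsto (slope F a) atTop (𝓝 d) := by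
  set g : ℝ → ℝ := fun x => slope F a (max x (a + 1))
  have hlt : ∀ x, a < max x (a + 1) := fun x => (lt_add_one a).trans_le (le_max_right _ _)
  have hg_mono : Monotone g := fun x y hxy =>
    hF.monotoneOn_slope_gt self_mem_Ici ⟨(hlt x).le, hlt x⟩ ⟨(hlt y).le, hlt y⟩
      (max_le_max hxy le_rfl)
  have hg_bdd : BddAbove (range g) := ⟨M, by rintro _ ⟨x, rfl⟩; exact hM _ (hlt x)⟩
  refine ⟨⨆ x, g x, (tendsto_atTop_ciSup hg_mono hg_bdd).congr' ?_⟩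
  filter_upwards [eventually_ge_atTop (a + 1)] with x hx
  simp only [g, max_eq_left hx]

lemma slope_le_of_tendsto_slope (hF : ConvexOn ℝ univ F) {x y d : ℝ}
    (hd : Tendsto (slope F x) atTop (𝓝 d)) (hxy : x < y) : slope F x y ≤ d := by
  refine ge_of_tendsto hd ?_
  filter_upwards [eventually_gt_atTop y] with z hz
  exact hF.slope_mono (mem_univ x) ⟨mem_univ y, hxy.ne'⟩ ⟨mem_univ z, (hxy.trans hz).ne'⟩ hz.le

end ConvexOn

theorem stmt11_general (F : ℝ → ℝ) (L : ℝ) (hconv : ConvexOn ℝ univ F)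
    (hL : ∀ x₀ x₁ : ℝ, x₀ ≠ x₁ → L ≤ (F x₀ * x₁ - F x₁ * x₀) / (x₁ - x₀)) :
    ∃ d β : ℝ, Tendsto (fun x => F x / x) atTop (nhds d) ∧
      β ∈ Icc L (F 0) ∧ Tendsto (fun x => F x - d * x) atTop (nhds β) := by
  have hintercept : ∀ a b, a ≠ b → L ≤ F a - a * slope F a b := fun a b hab =>
    chord_intercept_eq F hab ▸ hL a b hab
  obtain ⟨d, hd₁⟩ : ∃ d, Tendsto (slope F 1) atTop (𝓝 d) :=
    (hconv.subset (subset_univ _) (convex_Ici 1)).exists_tendsto_slope_atTop (M := F 1 - L)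
      fun x hx => by linarith [hintercept 1 x hx.ne]
  have hd : ∀ a, Tendsto (slope F a) atTop (𝓝 d) := hd₁.slope_atTop_of_slope_atTop
  have hanti : Antitone fun x => F x - d * x := antitone_sub_mul_of_slope_le
    fun x y hxy => hconv.slope_le_of_tendsto_slope (hd x) hxy
  have hlower : ∀ a, L ≤ F a - d * a := fun a => by
    have hlim := (tendsto_const_nhds (x := F a)).sub ((hd a).const_mul a)
    refine (mul_comm a d ▸ ge_of_tendsto hlim) ?_
    filter_upwards [eventually_ne_atTop a] with x hx using hintercept a x hx.symm
  have hbdd : BddBelow (range fun x => F x - d * x) := ⟨L, by rintro _ ⟨x, rfl⟩; exact hlower x⟩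
  refine ⟨d, ⨅ x, F x - d * x, tendsto_div_self_atTop_of_slope (hd 0),
    ⟨le_ciInf hlower, by simpa using ciInf_le hbdd 0⟩, tendsto_atTop_ciInf hanti hbdd⟩

theorem stmt11 (F : ℝ → ℝ) (R L : ℝ) (hconv : ConvexOn ℝ univ F)
    (hR : ∀ x₀ x₁ : ℝ, x₀ ≠ x₁ → |(F x₁ - F x₀) / (x₁ - x₀)| ≤ R)
    (hL : ∀ x₀ x₁ : ℝ, x₀ ≠ x₁ → L ≤ (F x₀ * x₁ - F x₁ * x₀) / (x₁ - x₀)) :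
    ∃ d β : ℝ, Tendsto (fun x => F x / x) atTop (nhds d) ∧
      β ∈ Icc L (F 0) ∧ Tendsto (fun x => F x - d * x) atTop (nhds β) :=
  stmt11_general F L hconv hL
end

section
/- Let q(z) = D z^n ∏_{i=1}^l (z − b_i) be a nonzero one-variable complex Laurent polynomial and m ∈ ℝ a real constant. Then the function t ↦ M(q(t^m z)) = |D|·t^{nm}·∏_{i=1}^l max(t^m, |b_i|) of t ∈ ℝ>0 is multiplicatively convex, where M denotes the Mahler measure. -/
open Real Set Filter

/-! The Mahler measure of `q(t^m z)` is built from the constant `|D|`, the power `t ^ (n m)` and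
the factors `max (t ^ m) |bᵢ|` by products and maxima, and multiplicative convexity of nonnegative
functions is preserved by both operations. -/

theorem mulConvex_const {c : ℝ} (hc : 0 ≤ c) : MulConvex fun _ => c := by
  intro _ _ l _ _ _ _
  rw [← rpow_add' hc (by norm_num), add_sub_cancel, rpow_one]

theorem mulConvex_rpow (a : ℝ) : MulConvex fun t => t ^ a := by
  intro t₀ t₁ l ht₀ ht₁ _ _
  beta_reduce
  rw [mul_rpow (rpow_nonneg ht₀.le _) (rpow_nonneg ht₁.le _), ← rpow_mul ht₀.le,
    ← rpow_mul ht₁.le, ← rpow_mul ht₀.le, ← rpow_mul ht₁.le, mul_comm l, mul_comm (1 - l)]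

namespace MulConvex

variable {f g : ℝ → ℝ}

theorem mul (hf : MulConvex f) (hg : MulConvex g) (hf₀ : ∀ t > 0, 0 ≤ f t)
    (hg₀ : ∀ t > 0, 0 ≤ g t) : MulConvex fun t => f t * g t := by
  intro t₀ t₁ l ht₀ ht₁ hl₀ hl₁
  calc f (t₀ ^ l * t₁ ^ (1 - l)) * g (t₀ ^ l * t₁ ^ (1 - l))
      ≤ (f t₀ ^ l * f t₁ ^ (1 - l)) * (g t₀ ^ l * g t₁ ^ (1 - l)) :=
        mul_le_mul (hf t₀ t₁ l ht₀ ht₁ hl₀ hl₁) (hg t₀ t₁ l ht₀ ht₁ hl₀ hl₁)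
          (hg₀ _ (by positivity))
          (mul_nonneg (rpow_nonneg (hf₀ t₀ ht₀) _) (rpow_nonneg (hf₀ t₁ ht₁) _))
    _ = (f t₀ * g t₀) ^ l * (f t₁ * g t₁) ^ (1 - l) := by
        rw [mul_rpow (hf₀ t₀ ht₀) (hg₀ t₀ ht₀), mul_rpow (hf₀ t₁ ht₁) (hg₀ t₁ ht₁)]
        ring

theorem max (hf : MulConvex f) (hg : MulConvex g) (hf₀ : ∀ t > 0, 0 ≤ f t)
    (hg₀ : ∀ t > 0, 0 ≤ g t) : MulConvex fun t => max (f t) (g t) := by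
  intro t₀ t₁ l ht₀ ht₁ hl₀ hl₁
  have hl₁' : 0 ≤ 1 - l := by linarith
  have mono : ∀ {x₀ x₁ y₀ y₁ : ℝ}, 0 ≤ x₀ → 0 ≤ x₁ → x₀ ≤ y₀ → x₁ ≤ y₁ →
      x₀ ^ l * x₁ ^ (1 - l) ≤ y₀ ^ l * y₁ ^ (1 - l) := fun h₀ h₁ hxy₀ hxy₁ =>
    mul_le_mul (rpow_le_rpow h₀ hxy₀ hl₀.le) (rpow_le_rpow h₁ hxy₁ hl₁')
      (rpow_nonneg h₁ _) (rpow_nonneg (h₀.trans hxy₀) _)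
  exact max_le
    ((hf t₀ t₁ l ht₀ ht₁ hl₀ hl₁).trans
      (mono (hf₀ t₀ ht₀) (hf₀ t₁ ht₁) (le_max_left _ _) (le_max_left _ _)))
    ((hg t₀ t₁ l ht₀ ht₁ hl₀ hl₁).trans
      (mono (hg₀ t₀ ht₀) (hg₀ t₁ ht₁) (le_max_right _ _) (le_max_right _ _)))

theorem finset_prod {ι : Type*} (s : Finset ι) {F : ι → ℝ → ℝ}
    (hF : ∀ i ∈ s, MulConvex (F i)) (hF₀ : ∀ i ∈ s, ∀ t > 0, 0 ≤ F i t) :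
    MulConvex fun t => ∏ i ∈ s, F i t := by
  induction s using Finset.cons_induction with
  | empty => simpa using mulConvex_const zero_le_one
  | cons a s ha ih =>
    simp only [Finset.prod_cons]
    simp only [Finset.mem_cons, forall_eq_or_imp] at hF hF₀
    exact (hF.1.mul (ih hF.2 hF₀.2) hF₀.1 fun t ht =>
      Finset.prod_nonneg fun i hi => hF₀.2 i hi t ht)

end MulConvex

theorem stmt15_general (D : ℂ) (n : ℤ) (l : ℕ) (b : Fin l → ℂ) (m : ℝ) :
    MulConvex (fun t : ℝ =>
      ‖D‖ * t ^ ((n : ℝ) * m) * ∏ i, max (t ^ m) ‖b i‖) := by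
  have rpow_nonneg_of_pos : ∀ a t : ℝ, 0 < t → 0 ≤ t ^ a := fun a _ ht => rpow_nonneg ht.le a
  have factor : ∀ i, MulConvex fun t : ℝ => max (t ^ m) ‖b i‖ := fun i =>
    (mulConvex_rpow m).max (mulConvex_const (norm_nonneg _)) (rpow_nonneg_of_pos m)
      fun _ _ => norm_nonneg _
  have factor₀ : ∀ i (t : ℝ), 0 ≤ max (t ^ m) ‖b i‖ := fun i _ =>
    le_max_of_le_right (norm_nonneg _)
  have leading : MulConvex fun t : ℝ => ‖D‖ * t ^ ((n : ℝ) * m) :=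
    (mulConvex_const (norm_nonneg D)).mul (mulConvex_rpow _) (fun _ _ => norm_nonneg D)
      (rpow_nonneg_of_pos _)
  exact leading.mul (MulConvex.finset_prod _ (fun i _ => factor i) fun i _ t _ => factor₀ i t)
    (fun t ht => mul_nonneg (norm_nonneg D) (rpow_nonneg_of_pos _ t ht))
    fun t _ => Finset.prod_nonneg fun i _ => factor₀ i t

theorem stmt15 (D : ℂ) (hD : D ≠ 0) (n : ℤ) (l : ℕ) (b : Fin l → ℂ) (m : ℝ) :
    MulConvex (fun t : ℝ =>
      ‖D‖ * t ^ ((n : ℝ) * m) * ∏ i, max (t ^ m) ‖b i‖) :=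
  stmt15_general D n l b m
end
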